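/- Let g:(0,∞)→(0,∞) be increasing and regularly varying at infinity with some index α ≥ 0, satisfying g(r)/log r → ∞, and suppose h(t) → ∞ as t → ∞ where h(t) is the largest h with t/h ≥ g(h) − log t. Then for all sufficiently large t, t/h(t) ≤ 2(g(h(t)) − log t). -/

import Mathlib

/-!
Suppose `u := t / h(t)` exceeds `2 (g(h) - log t)`. Maximality of `h` at `l h`, for `l` slightly
above `1`, gives `u < l (g(l h) - log t)`, and regular variation makes `g(l h) < (5/4) g(h)` for `l`
close to `1`. Together these force `log t > (7/12) g(h)` and `u < (5/6) g(h)`. Since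
`g(h) ≥ 4 log h`, this gives `h² < t`, hence `√t < u < 2 log t`, which fails for large `t`.
-/

open Filter Topology Real

lemma eventually_nhdsGT_one_eventually_div_lt {g : ℝ → ℝ} {α c : ℝ}
    (hRV : ∀ l : ℝ, 0 < l → Tendsto (fun r => g (l * r) / g r) atTop (𝓝 (l ^ α)))
    (hc : 1 < c) :
    ∀ᶠ l in 𝓝[>] (1 : ℝ), ∀ᶠ r in atTop, g (l * r) / g r < c := by
  have hpow : ∀ᶠ l in 𝓝 (1 : ℝ), l ^ α < c := by
    exact (continuousAt_rpow_const 1 α (Or.inl one_ne_zero)).eventually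
      (gt_mem_nhds (by simpa using hc))
  filter_upwards [hpow.filter_mono nhdsWithin_le_nhds, self_mem_nhdsWithin] with l hlc hl
  exact (hRV l (zero_lt_one.trans hl)).eventually_lt_const hlc

lemma eventually_four_mul_log_sq_lt : ∀ᶠ t in atTop, 4 * log t ^ 2 < t := by
  filter_upwards [(isLittleO_pow_log_id_atTop (n := 2)).def (by norm_num : (0 : ℝ) < 1 / 8),
    eventually_gt_atTop 0] with t hlog ht
  rw [norm_of_nonneg (by positivity), id, norm_of_nonneg ht.le] at hlog
  linarith

lemma div_lt_sub_log_of_isGreatest {g : ℝ → ℝ} {t H l : ℝ}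
    (hH : IsGreatest {x : ℝ | 0 < x ∧ g x - log t ≤ t / x} H) (hl : 1 < l) :
    t / (l * H) < g (l * H) - log t := by
  by_contra! hle
  have hlH : l * H ≤ H := hH.2 ⟨mul_pos (zero_lt_one.trans hl) hH.1.1, hle⟩
  nlinarith [hH.1.1]

lemma lt_log_and_lt_of_lt_mul_sub {A L s l u : ℝ} (hu : 0 < u) (hl0 : 0 < l) (hl : l < 5 / 4)
    (hs : s < 5 / 4 * A) (hlow : 2 * (A - L) < u) (hup : u < l * (s - L)) :
    7 / 12 * A < L ∧ u < 5 / 6 * A := by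
  have hsL : 0 < s - L := by nlinarith
  have hup' : u < 5 / 4 * (5 / 4 * A - L) := by nlinarith
  constructor <;> linarith

lemma div_le_two_mul_sub_log_of_isGreatest {g : ℝ → ℝ} {t H l : ℝ}
    (hH : IsGreatest {x : ℝ | 0 < x ∧ g x - log t ≤ t / x} H) (hl1 : 1 < l) (hl : l < 5 / 4)
    (hgl : g (l * H) < 5 / 4 * g H) (hglog : 4 * log H ≤ g H) (ht : 4 * log t ^ 2 < t) :
    t / H ≤ 2 * (g H - log t) := by
  have hH0 : 0 < H := hH.1.1
  have ht0 : 0 < t := lt_of_le_of_lt (by positivity) ht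
  set u := t / H
  have hu : 0 < u := div_pos ht0 hH0
  have hmax : u < l * (g (l * H) - log t) := by
    have := div_lt_sub_log_of_isGreatest hH hl1
    rwa [show t / (l * H) = u / l by ring, div_lt_iff₀' (zero_lt_one.trans hl1)] at this
  by_contra! hlow
  obtain ⟨hL, hA⟩ := lt_log_and_lt_of_lt_mul_sub hu (zero_lt_one.trans hl1) hl hgl hlow hmax
  have hsq : H ^ 2 < t := by
    rw [← log_lt_log_iff (by positivity) ht0, log_pow]
    push_cast
    linarith
  have hHu : H < u := by
    rw [lt_div_iff₀ hH0]
    nlinarith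
  have huL : u < 2 * log t := by linarith
  have : t < 4 * log t ^ 2 := calc
    t = u * H := (div_mul_cancel₀ t hH0.ne').symm
    _ < u * u := by gcongr
    _ < (2 * log t) ^ 2 := by nlinarith
    _ = 4 * log t ^ 2 := by ring
  linarith

theorem stmt1_general (g h : ℝ → ℝ) (α : ℝ)
    (hRV : ∀ l : ℝ, 0 < l →
      Tendsto (fun r => g (l * r) / g r) atTop (nhds (l ^ α)))
    (hglog : Tendsto (fun r => g r / Real.log r) atTop atTop)
    (hh : ∀ᶠ t in atTop,
      IsGreatest {x : ℝ | 0 < x ∧ g x - Real.log t ≤ t / x} (h t))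
    (hhtop : Tendsto h atTop atTop) :
    ∀ᶠ t in atTop, t / h t ≤ 2 * (g (h t) - Real.log t) := by
  obtain ⟨l, hl_ratio, hl⟩ := ((eventually_nhdsGT_one_eventually_div_lt hRV
    (by norm_num : (1 : ℝ) < 5 / 4)).and (Ioo_mem_nhdsGT (by norm_num : (1 : ℝ) < 5 / 4))).exists
  have hg : ∀ᶠ r in atTop, g (l * r) < 5 / 4 * g r ∧ 4 * log r ≤ g r := by
    filter_upwards [hl_ratio, hglog.eventually_ge_atTop 4, eventually_gt_atTop 1]
      with r hratio hlog hr
    have hlog' : 4 * log r ≤ g r := (le_div_iff₀ (log_pos hr)).1 hlog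
    have hgr : 0 < g r := by linarith [log_pos hr]
    exact ⟨by linarith [(div_lt_iff₀ hgr).1 hratio], hlog'⟩
  filter_upwards [hh, hhtop.eventually hg, eventually_four_mul_log_sq_lt]
    with t hmax ⟨hgl, hglog⟩ hlt
  exact div_le_two_mul_sub_log_of_isGreatest hmax hl.1 hl.2 hgl hglog hlt

/-- If `g` is increasing, regularly varying at infinity with index `α ≥ 0`,
`g(r)/log r → ∞`, and `h(t) → ∞` where `h(t)` is the largest `h > 0` with
`t/h ≥ g(h) - log t`, then eventually `t/h(t) ≤ 2 (g(h(t)) - log t)`. -/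
theorem stmt1 (g h : ℝ → ℝ) (α : ℝ) (hα : 0 ≤ α)
    (hg_pos : ∀ r > 0, 0 < g r)
    (hg_mono : MonotoneOn g (Set.Ioi (0 : ℝ)))
    (hRV : ∀ l : ℝ, 0 < l →
      Tendsto (fun r => g (l * r) / g r) atTop (nhds (l ^ α)))
    (hglog : Tendsto (fun r => g r / Real.log r) atTop atTop)
    (hh : ∀ᶠ t in atTop,
      IsGreatest {x : ℝ | 0 < x ∧ g x - Real.log t ≤ t / x} (h t))
    (hhtop : Tendsto h atTop atTop) :
    ∀ᶠ t in atTop, t / h t ≤ 2 * (g (h t) - Real.log t) :=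
  stmt1_general g h α hRV hglog hh hhtop
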